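/- arXiv:1709.00175 — 4 statements merged into one kernel-verified Lean document; each statement's English description precedes it below -/
import Mathlib

section
/- Let A be an abelian artinian category and B a Serre subcategory of A, and denote by ⊥B the full subcategory of objects X with Hom_A(X,Y) = 0 for all Y ∈ B. Then: (i) ⊥B is stable under taking quotients and extensions in A; (ii) every object X of A lies in an exact sequence 0 → X^B → X → X_B → 0 with X^B ∈ ⊥B and X_B ∈ B, and such a sequence is unique up to isomorphism. -/
open CategoryTheory CategoryTheory.Limits ZeroObject

universe w v u v₂ u₂ v₃ u₃ v₄ u₄

namespace Paper

/-- An object is artinian if every descending chain of subobjects is stationary. -/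
def IsArtinianObj {A : Type u} [Category.{v} A] (X : A) : Prop :=
  ∀ f : ℕ → Subobject X, (∀ n, f (n + 1) ≤ f n) → ∃ N, ∀ n, N ≤ n → f n = f N

/-- An abelian category is artinian if every object is artinian. -/
def IsArtinianCat (A : Type u) [Category.{v} A] : Prop :=
  ∀ X : A, IsArtinianObj X

/-- A Serre subcategory, given as a property of objects: closed under isomorphisms,
subobjects, quotients and extensions, and containing a zero object. -/
structure IsSerreSub {A : Type u} [Category.{v} A] [Abelian A] (P : A → Prop) : Prop where
  zero : P 0
  of_iso : ∀ {X Y : A}, (X ≅ Y) → P X → P Y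
  of_mono : ∀ {X Y : A} (f : X ⟶ Y), Mono f → P Y → P X
  of_epi : ∀ {X Y : A} (f : X ⟶ Y), Epi f → P X → P Y
  of_extension : ∀ (S : ShortComplex A), S.ShortExact → P S.X₁ → P S.X₃ → P S.X₂

/-- The left orthogonal `⊥B` of a class of objects: objects admitting no nonzero
morphism to any object of `B`. -/
def perp {A : Type u} [Category.{v} A] [Abelian A] (P : A → Prop) (X : A) : Prop :=
  ∀ (Y : A), P Y → ∀ f : X ⟶ Y, f = 0

/-- The pair `(A, B)` satisfies the lifting property if every epimorphism onto an object
of `B` admits a restriction to a subobject lying in `B` which is still an epimorphism. -/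
def LiftingProperty {A : Type u} [Category.{v} A] [Abelian A] (P : A → Prop) : Prop :=
  ∀ {X Y : A} (f : X ⟶ Y), Epi f → P Y →
    ∃ (X' : A) (ι : X' ⟶ X), Mono ι ∧ P X' ∧ Epi (ι ≫ f)

/-- The class of morphisms whose kernel and cokernel both lie in `P`; the Gabriel quotient
`A/P` is the localization of `A` at this class of morphisms. -/
def serreW {A : Type u} [Category.{v} A] [Abelian A] (P : A → Prop) : MorphismProperty A :=
  fun _ _ f => P (kernel f) ∧ P (cokernel f)

/-- The homological dimension of an abelian category, as an element of `ℕ∞`: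
the smallest `n` such that `Ext^i(X,Y) = 0` for all objects `X`, `Y` and all `i > n`
(and `∞` if there is no such `n`). -/
noncomputable def homDim (A : Type u) [Category.{v} A] [Abelian A] : ℕ∞ :=
  letI : HasDerivedCategory A := HasDerivedCategory.standard A
  haveI : HasExt.{max u v} A := hasExt_of_hasDerivedCategory A
  sInf {n : ℕ∞ | ∀ (X Y : A) (i : ℕ), n < (i : ℕ∞) → Subsingleton (Abelian.Ext X Y i)}

/-- `n` is an `S`-number: a positive integer all of whose prime factors lie in `S`. -/
def IsSNumber (S : Set ℕ) (n : ℕ) : Prop :=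
  0 < n ∧ ∀ p : ℕ, p.Prime → p ∣ n → p ∈ S

/-- An object is `S`-primary torsion if it is killed by some `S`-number. -/
def STorsionObj (S : Set ℕ) {A : Type u} [Category.{v} A] [Preadditive A] (X : A) : Prop :=
  ∃ n : ℕ, IsSNumber S n ∧ n • (𝟙 X) = 0

/-- The canonical morphism `Y/Y₁ ⟶ Y/Y₂` for subobjects `Y₁ ≤ Y₂` of `Y`. -/
noncomputable def quotMap {A : Type u} [Category.{v} A] [Abelian A] {Y : A}
    {Y₁ Y₂ : Subobject Y} (h : Y₁ ≤ Y₂) :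
    cokernel Y₁.arrow ⟶ cokernel Y₂.arrow :=
  cokernel.desc _ (cokernel.π _)
    (by rw [← Subobject.ofLE_arrow h, Category.assoc, cokernel.condition, comp_zero])

end Paper
namespace Paper

open CategoryTheory CategoryTheory.Limits

attribute [local instance] CategoryTheory.Abelian.Pseudoelement.objectToSort
  CategoryTheory.Abelian.Pseudoelement.homToFun

/-- In an artinian object, every nonempty set of subobjects has a minimal element. -/
lemma exists_minimal {A : Type u} [Category.{v} A] {X : A}
    (hX : IsArtinianObj X) (s : Set (Subobject X)) (hs : s.Nonempty) :
    ∃ Z ∈ s, ∀ W ∈ s, W ≤ Z → W = Z := by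
  by_contra h
  push_neg at h
  choose g hg₁ hg₂ hg₃ using h
  obtain ⟨Z₀, hZ₀⟩ := hs
  let F : ℕ → {Z : Subobject X // Z ∈ s} := fun n =>
    Nat.rec ⟨Z₀, hZ₀⟩ (fun _ p => ⟨g p.1 p.2, hg₁ p.1 p.2⟩) n
  obtain ⟨N, hN⟩ := hX (fun n => (F n).1) (fun n => hg₂ (F n).1 (F n).2)
  exact hg₃ (F N).1 (F N).2 (hN (N + 1) (by omega))

/-- Let `A` be an artinian abelian category, `B` a Serre subcategory, and
`⊥B` the class of objects `X` with `Hom(X, Y) = 0` for all `Y ∈ B`. Then: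
(i) `⊥B` is stable under quotients and extensions;
(ii) every `X` lies in an exact sequence `0 → X^B → X → X_B → 0` with `X^B ∈ ⊥B` and
`X_B ∈ B`, uniquely up to isomorphism. -/
theorem perp_stability_and_canonical_exact_sequence
    (A : Type u) [Category.{v} A] [Abelian A] (hA : IsArtinianCat A)
    (B : A → Prop) (hB : IsSerreSub B) :
    (∀ (X Y : A) (f : X ⟶ Y), Epi f → perp B X → perp B Y) ∧
    (∀ S : ShortComplex A, S.ShortExact → perp B S.X₁ → perp B S.X₃ → perp B S.X₂) ∧
    (∀ X : A, ∃ (Z : A) (i : Z ⟶ X), Mono i ∧ perp B Z ∧ B (cokernel i) ∧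
      ∀ (Z' : A) (i' : Z' ⟶ X), Mono i' → perp B Z' → B (cokernel i') →
        ∃ e : Z ≅ Z', e.hom ≫ i' = i) := by
  classical
  refine ⟨?_, ?_, ?_⟩
  · -- quotients
    intro X Y f hf hX Z hZ g
    have h0 : f ≫ g = 0 := hX Z hZ _
    rw [← cancel_epi f, h0, comp_zero]
  · -- extensions
    intro S hS h1 h3 Y hY g
    haveI := hS.mono_f
    haveI := hS.epi_g
    have hfg : S.f ≫ g = 0 := h1 Y hY _
    obtain ⟨d, hd⟩ := CokernelCofork.IsColimit.desc' hS.exact.gIsCokernel g hfg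
    dsimp at hd
    rw [← hd, h3 Y hY d, comp_zero]
  · -- existence and uniqueness of the canonical subobject
    intro X
    set s : Set (Subobject X) := {Z | B (cokernel Z.arrow)} with hs_def
    have hstop : (⊤ : Subobject X) ∈ s :=
      hB.of_iso (cokernel.ofEpi _).symm hB.zero
    obtain ⟨Z, hZ, hmin⟩ := exists_minimal (hA X) s ⟨⊤, hstop⟩
    -- `Z` is the minimal subobject with quotient in `B`.
    have hperp : perp B (Z : A) := by
      intro Y hY f
      set m : (kernel f : A) ⟶ X := kernel.ι f ≫ Z.arrow with hm_def
      haveI : Mono m := mono_comp _ _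
      -- the coimage of `f` lies in `B`
      have hcokk : B (cokernel (kernel.ι f)) :=
        hB.of_mono (Abelian.factorThruCoimage f) inferInstance hY
      -- maps between the quotients
      set u : cokernel (kernel.ι f) ⟶ cokernel m :=
        cokernel.desc _ (Z.arrow ≫ cokernel.π m)
          (by rw [← Category.assoc, ← hm_def, cokernel.condition]) with hu_def
      set v : cokernel m ⟶ cokernel Z.arrow :=
        cokernel.desc _ (cokernel.π Z.arrow)
          (by rw [hm_def, Category.assoc, cokernel.condition, comp_zero]) with hv_def
      have hπv : cokernel.π m ≫ v = cokernel.π Z.arrow := cokernel.π_desc _ _ _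
      haveI hepiv : Epi v := epi_of_epi_fac hπv
      have huv : u ≫ v = 0 := by
        rw [← cancel_epi (cokernel.π (kernel.ι f)), comp_zero, ← Category.assoc, hu_def,
          cokernel.π_desc, Category.assoc, hπv, cokernel.condition]
      set u' : cokernel (kernel.ι f) ⟶ kernel v := kernel.lift v u huv with hu'_def
      -- `u'` is an epimorphism, by a pseudoelement chase
      have hepiu' : Epi u' := by
        apply Abelian.Pseudoelement.epi_of_pseudo_surjective
        intro b
        have hbv : v ((kernel.ι v) b) = 0 := by
          rw [← Abelian.Pseudoelement.comp_apply, kernel.condition,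
            Abelian.Pseudoelement.zero_apply]
        obtain ⟨x, hx⟩ := Abelian.Pseudoelement.pseudo_surjective_of_epi
          (cokernel.π m) ((kernel.ι v) b)
        have hx0 : (cokernel.π Z.arrow) x = 0 := by
          rw [← hπv, Abelian.Pseudoelement.comp_apply, hx, hbv]
        obtain ⟨z, hz⟩ := Abelian.Pseudoelement.pseudo_exact_of_exact
          (S := ShortComplex.mk Z.arrow (cokernel.π Z.arrow) (cokernel.condition _))
          (ShortComplex.exact_of_g_is_cokernel _ (cokernelIsCokernel _)) x hx0
        refine ⟨(cokernel.π (kernel.ι f)) z, ?_⟩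
        apply Abelian.Pseudoelement.pseudo_injective_of_mono (kernel.ι v)
        rw [← Abelian.Pseudoelement.comp_apply, hu'_def, kernel.lift_ι,
          ← Abelian.Pseudoelement.comp_apply, hu_def, cokernel.π_desc,
          Abelian.Pseudoelement.comp_apply, hz, hx]
      -- the quotient `X/ker f∩Z` is an extension of objects of `B`
      have hkerv : B (kernel v) := hB.of_epi u' hepiu' hcokk
      have hSE : (ShortComplex.mk (kernel.ι v) v (kernel.condition v)).ShortExact :=
        { exact := ShortComplex.exact_of_f_is_kernel _ (kernelIsKernel v) }
      have hcokm : B (cokernel m) := hB.of_extension _ hSE hkerv hZ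
      -- hence `Subobject.mk m` belongs to `s`, and is ≤ `Z`; minimality concludes
      have hWle : Subobject.mk m ≤ Z := by
        conv_rhs => rw [← Subobject.mk_arrow Z]
        exact Subobject.mk_le_mk_of_comm (kernel.ι f) rfl
      have hWmem : Subobject.mk m ∈ s := by
        refine hB.of_iso ?_ hcokm
        exact (cokernelIsoOfEq (Subobject.underlyingIso_arrow m).symm).trans
          (cokernelEpiComp _ _)
      have hW : Subobject.mk m = Z := hmin _ hWmem hWle
      -- therefore `kernel.ι f` is split epi, so `f = 0`
      have hZle : Z ≤ Subobject.mk m := le_of_eq hW.symm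
      set ρ : (Z : A) ⟶ ((Subobject.mk m : Subobject X) : A) := Subobject.ofLE _ _ hZle
      have hρ : ρ ≫ (Subobject.mk m).arrow = Z.arrow := Subobject.ofLE_arrow hZle
      have hsplit' : (ρ ≫ (Subobject.underlyingIso m).hom ≫ kernel.ι f) = 𝟙 (Z : A) := by
        rw [← cancel_mono Z.arrow]
        simp only [Category.assoc]
        rw [← hm_def, Subobject.underlyingIso_hom_comp_eq_mk m, hρ, Category.id_comp]
      calc f = 𝟙 (Z : A) ≫ f := (Category.id_comp f).symm
        _ = ρ ≫ (Subobject.underlyingIso m).hom ≫ kernel.ι f ≫ f := by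
            rw [← hsplit']; simp only [Category.assoc]
        _ = 0 := by rw [kernel.condition f]; simp
    refine ⟨(Z : A), Z.arrow, inferInstance, hperp, hZ, ?_⟩
    -- uniqueness
    intro Z' i' hmono' hperp' hcok'
    haveI := hmono'
    have h1 : i' ≫ cokernel.π Z.arrow = 0 := hperp' _ hZ _
    have h2 : Z.arrow ≫ cokernel.π i' = 0 := hperp _ hcok' _
    set a : Z' ⟶ (Z : A) := Abelian.monoLift Z.arrow i' h1 with ha_def
    set b : (Z : A) ⟶ Z' := Abelian.monoLift i' Z.arrow h2 with hb_def
    have hai : a ≫ Z.arrow = i' := Abelian.monoLift_comp _ _ _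
    have hbi : b ≫ i' = Z.arrow := Abelian.monoLift_comp _ _ _
    refine ⟨⟨b, a, ?_, ?_⟩, hbi⟩
    · rw [← cancel_mono Z.arrow, Category.assoc, hai, hbi, Category.id_comp]
    · rw [← cancel_mono i', Category.assoc, hbi, hai, Category.id_comp]


end Paper
end

section
/- Let A be an artinian abelian category, B a Serre subcategory, and let C be the full subcategory of the quotient category A/B whose objects are those of ⊥B. Then: (i) the inclusion of C in A/B is an equivalence of categories; (ii) for X, Y ∈ C, Hom_C(X,Y) is the direct limit of Hom_A(X, Y/Y') over subobjects Y' ⊂ Y with Y' ∈ B; (iii) if φ ∈ Hom_C(X,Y) is represented by f ∈ Hom_A(X, Y/Y'), then φ = 0 iff f = 0, φ is a monomorphism iff Ker(f) ∈ B, and φ is an epimorphism iff f is an epimorphism. -/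
open CategoryTheory CategoryTheory.Limits ZeroObject

universe w v u v₂ u₂ v₃ u₃ v₄ u₄

/-!
`A/B` is the localization of `A` at `B.isoModSerre`, which has a calculus of left fractions.

(i) In an artinian `X`, a minimal subobject `M` with `X/M ∈ B` lies in `⊥B`: the kernel `K` of a
map `M ⟶ T ∈ B` again has `X/K ∈ B`, so `K = M`. And `Q` inverts `M ⟶ X`.

(ii) Write `g` as a fraction `g ≫ Q s = Q f` with `s : Y ⟶ Y''`. For `Y' = ker s ∈ B`, `Y/Y'`
embeds into `Y''` with cokernel in `B`, and `f` factors through it because `X ∈ ⊥B`. Uniqueness,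
like the zero criterion in (iii), holds because `Q` is faithful on morphisms out of `⊥B`: `Q h = 0`
iff the image of `h` lies in `B`.

(iii) `Mono (Q f) ↔ ker f ∈ B`, `Epi (Q f) ↔ coker f ∈ B`, and a quotient of an object of `⊥B`
that lies in `B` is zero.
-/

namespace Paper

open CategoryTheory Limits ObjectProperty

lemma IsArtinianObj.isArtinianObject {A : Type u} [Category.{v} A] {X : A}
    (hX : IsArtinianObj X) : IsArtinianObject X :=
  (isArtinianObject_iff_antitone_chain_condition X).2 fun f => by
    obtain ⟨N, hN⟩ := hX (fun n => OrderDual.ofDual (f n)) fun n => f.monotone n.le_succ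
    exact ⟨N, fun m hm => (hN m hm).symm⟩

section

variable {A : Type u} [Category.{v} A] [Abelian A]

lemma IsSerreSub.isSerreClass {B : A → Prop} (hB : IsSerreSub B) : IsSerreClass B where
  exists_zero := ⟨0, isZero_zero A, hB.zero⟩
  prop_of_mono f _ hY := hB.of_mono f inferInstance hY
  prop_of_epi f _ hX := hB.of_epi f inferInstance hX
  prop_X₂_of_shortExact hS h₁ h₃ := hB.of_extension _ hS h₁ h₃

lemma serreW_eq_isoModSerre (P : ObjectProperty A) [P.IsSerreClass] :
    serreW P = P.isoModSerre :=
  rfl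

lemma cokernel_π_comp_quotMap {Y : A} {Y₁ Y₂ : Subobject Y} (h : Y₁ ≤ Y₂) :
    cokernel.π Y₁.arrow ≫ quotMap h = cokernel.π Y₂.arrow :=
  cokernel.π_desc _ _ _

variable {P : ObjectProperty A}

lemma perp_of_epi {X Z : A} (hX : perp P X) (e : X ⟶ Z) [Epi e] : perp P Z :=
  fun T hT f => by rw [← cancel_epi e, hX T hT (e ≫ f), comp_zero]

lemma isZero_of_perp_of_prop {X : A} (hX : perp P X) (hP : P X) : IsZero X :=
  (IsZero.iff_id_eq_zero X).2 (hX X hP (𝟙 X))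

lemma eq_zero_of_perp_of_prop_image {X Y : A} (hX : perp P X) {f : X ⟶ Y}
    (hf : P (Abelian.image f)) : f = 0 := by
  rw [← Abelian.image.fac f, hX _ hf (Abelian.factorThruImage f), zero_comp]

variable [P.IsSerreClass]

lemma exists_subobject_perp_of_isArtinianObject (X : A) [IsArtinianObject X] :
    ∃ M : Subobject X, perp P M ∧ P.epiModSerre M.arrow := by
  obtain ⟨M, hM, hmin⟩ := wellFounded_lt.has_min {M : Subobject X | P.epiModSerre M.arrow}
    ⟨⊤, P.epiModSerre_of_epi _⟩
  refine ⟨M, fun T hT φ => ?_, hM⟩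
  suffices IsIso (kernel.ι φ) from zero_of_epi_comp (kernel.ι φ) (kernel.condition φ)
  by_contra hφ
  have hlt : Subobject.mk (kernel.ι φ ≫ M.arrow) < M := by
    simpa only [Subobject.mk_arrow] using Subobject.mk_lt_mk_of_comm (i₂ := M.arrow) _ rfl hφ
  -- `cokernel (kernel.ι φ)` is the coimage of `φ`, a subobject of `T`
  have hker : P.epiModSerre (kernel.ι φ) := P.prop_of_mono (Abelian.factorThruCoimage φ) hT
  refine hmin _ ?_ hlt
  rw [Set.mem_ofPred_eq, ← Subobject.underlyingIso_hom_comp_eq_mk]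
  exact P.epiModSerre.comp_mem _ _ (P.epiModSerre_of_epi _) (P.epiModSerre.comp_mem _ _ hker hM)

lemma directedOn_subobject_prop (Y : A) : DirectedOn (· ≤ ·) {Y' : Subobject Y | P Y'} := by
  intro Y₁ h₁ Y₂ h₂
  let w := biprod.desc Y₁.arrow Y₂.arrow
  refine ⟨imageSubobject w, P.prop_of_epi (factorThruImageSubobject w) (P.prop_biprod h₁ h₂),
    Subobject.le_of_comm (biprod.inl ≫ factorThruImageSubobject w) ?_,
    Subobject.le_of_comm (biprod.inr ≫ factorThruImageSubobject w) ?_⟩ <;>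
  simp [w, imageSubobject_arrow_comp]

section Localization

variable {D : Type u₂} [Category.{v₂} D] (L : A ⥤ D) [L.IsLocalization P.isoModSerre]

lemma isIso_map_cokernel_π {Y' Y : A} (hY' : P Y') (f : Y' ⟶ Y) :
    IsIso (L.map (cokernel.π f)) :=
  Localization.inverts L P.isoModSerre _
    (P.isoModSerre_of_epi _ (P.prop_of_epi (Abelian.factorThruImage f) hY'))

lemma exists_map_eq_comp_map_cokernel_π {X Y : A} (hX : perp P X) (g : L.obj X ⟶ L.obj Y) :
    ∃ Y' : Subobject Y, P Y' ∧
      ∃ f : X ⟶ cokernel Y'.arrow, L.map f = g ≫ L.map (cokernel.π Y'.arrow) := by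
  obtain ⟨φ, rfl⟩ := Localization.exists_leftFraction L P.isoModSerre g
  let Y' := kernelSubobject φ.s
  let S := ShortComplex.mk Y'.arrow φ.s (kernelSubobject_arrow_comp φ.s)
  have hS : S.Exact := by
    rw [ShortComplex.exact_iff_image_eq_kernel, imageSubobject_mono, Subobject.mk_arrow]
  let u : cokernel Y'.arrow ⟶ φ.Y' := cokernel.desc _ φ.s S.zero
  have : Mono u := hS.mono_cokernelDesc
  have hu : P.isoModSerre u := P.isoModSerre_of_mono u
    (P.prop_of_iso ((cokernelIsoOfEq (cokernel.π_desc _ _ _)).symm ≪≫ cokernelEpiComp _ u)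
      φ.hs.2)
  have hf : φ.f ≫ cokernel.π u = 0 := hX _ hu.2 _
  have := Localization.inverts L P.isoModSerre u hu
  refine ⟨Y', P.prop_of_iso (kernelSubobjectIso φ.s).symm φ.hs.1, Abelian.monoLift u φ.f hf, ?_⟩
  rw [← cancel_mono (L.map u), ← L.map_comp, Abelian.monoLift_comp, Category.assoc,
    ← L.map_comp, cokernel.π_desc, φ.map_comp_map_s]

variable [Preadditive D] [L.Additive]

lemma map_injective_of_perp {X Y : A} (hX : perp P X) :
    Function.Injective (L.map : (X ⟶ Y) → _) := fun f f' h => by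
  rw [← sub_eq_zero, ← L.map_sub, SerreClassLocalization.map_eq_zero_iff L P] at h
  exact sub_eq_zero.1 (eq_zero_of_perp_of_prop_image hX h)

lemma epi_map_iff_of_perp {X Y : A} (hY : perp P Y) (f : X ⟶ Y) : Epi (L.map f) ↔ Epi f := by
  rw [SerreClassLocalization.epi_map_iff L P, Preadditive.epi_iff_isZero_cokernel]
  exact ⟨isZero_of_perp_of_prop (perp_of_epi hY (cokernel.π f)), P.prop_of_isZero⟩

end Localization

end

theorem quotient_category_hom_description_general
    (A : Type u) [Category.{v} A] [Abelian A] (hA : IsArtinianCat A)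
    (B : A → Prop) (hB : IsSerreSub B)
    (D : Type u₂) [Category.{v₂} D] [Abelian D] (Q : A ⥤ D)
    [Q.IsLocalization (serreW B)]
    [PreservesFiniteLimits Q] :
    (∀ d : D, ∃ X : A, perp B X ∧ Nonempty (d ≅ Q.obj X)) ∧
    (∀ X Y : A, perp B X → perp B Y →
      (∀ g : Q.obj X ⟶ Q.obj Y, ∃ Y' : Subobject Y, B (Y' : A) ∧
        ∃ f : X ⟶ cokernel Y'.arrow, Q.map f = g ≫ Q.map (cokernel.π Y'.arrow)) ∧
      (∀ (Y₁ Y₂ : Subobject Y), B (Y₁ : A) → B (Y₂ : A) →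
        ∀ (f₁ : X ⟶ cokernel Y₁.arrow) (f₂ : X ⟶ cokernel Y₂.arrow)
          (g : Q.obj X ⟶ Q.obj Y),
          Q.map f₁ = g ≫ Q.map (cokernel.π Y₁.arrow) →
          Q.map f₂ = g ≫ Q.map (cokernel.π Y₂.arrow) →
          ∃ (Y₃ : Subobject Y) (h₁ : Y₁ ≤ Y₃) (h₂ : Y₂ ≤ Y₃), B (Y₃ : A) ∧
            f₁ ≫ quotMap h₁ = f₂ ≫ quotMap h₂)) ∧
    (∀ X Y : A, perp B X → perp B Y → ∀ Y' : Subobject Y, B (Y' : A) →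
      ∀ (f : X ⟶ cokernel Y'.arrow) (g : Q.obj X ⟶ Q.obj Y),
        Q.map f = g ≫ Q.map (cokernel.π Y'.arrow) →
        ((g = 0 ↔ f = 0) ∧ (Mono g ↔ B (kernel f)) ∧ (Epi g ↔ Epi f))) := by
  have := hB.isSerreClass
  have : Q.IsLocalization (isoModSerre B) := serreW_eq_isoModSerre B ▸ ‹_›
  have := Q.additive_of_preserves_binary_products
  have := Localization.essSurj Q (isoModSerre B)
  refine ⟨fun d => ?_, fun X Y hX _ => ⟨exists_map_eq_comp_map_cokernel_π Q hX, ?_⟩,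
    fun X Y hX hY Y' hY' f g hfg => ?_⟩
  · have := (hA (Q.objPreimage d)).isArtinianObject
    obtain ⟨M, hM, hMB⟩ := exists_subobject_perp_of_isArtinianObject (P := B) (Q.objPreimage d)
    have := Localization.inverts Q _ M.arrow (isoModSerre_of_mono B _ hMB)
    exact ⟨M, hM, ⟨(Q.objObjPreimageIso d).symm ≪≫ (asIso (Q.map M.arrow)).symm⟩⟩
  · intro Y₁ Y₂ h₁ h₂ f₁ f₂ g hg₁ hg₂
    obtain ⟨Y₃, h₃, le₁, le₂⟩ := directedOn_subobject_prop Y Y₁ h₁ Y₂ h₂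
    refine ⟨Y₃, le₁, le₂, h₃, map_injective_of_perp Q hX ?_⟩
    simp only [Q.map_comp, hg₁, hg₂, Category.assoc, ← Q.map_comp, cokernel_π_comp_quotMap]
  · have := isIso_map_cokernel_π Q hY' Y'.arrow
    have hg : g = Q.map f ≫ inv (Q.map (cokernel.π Y'.arrow)) := by simp [hfg]
    refine ⟨?_, ?_, ?_⟩
    · rw [hg, Preadditive.IsIso.comp_right_eq_zero, ← Q.map_zero,
        (map_injective_of_perp Q hX).eq_iff]
    · rw [hg, mono_comp_iff_of_mono, SerreClassLocalization.mono_map_iff Q B,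
        monoModSerre_iff]
    · rw [hg, epi_comp_iff_of_isIso,
        epi_map_iff_of_perp Q (perp_of_epi hY (cokernel.π Y'.arrow))]

/-- **Statement 9.** Let `A` be an artinian abelian category, `B` a Serre subcategory, and
realize the Gabriel quotient `A/B` as an abelian category `D` with an exact localization
functor `Q : A ⥤ D` at the morphisms with kernel and cokernel in `B`. Then:
(i) the full subcategory of `A/B` on the objects of `⊥B` is equivalent to `A/B`
(i.e. every object of `A/B` is isomorphic to the image of an object of `⊥B`);
(ii) for `X, Y ∈ ⊥B`, `Hom_{A/B}(X, Y)` is the direct limit of `Hom_A(X, Y/Y')` over the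
subobjects `Y' ⊆ Y` lying in `B` (expressed below as: every `g : Q(X) ⟶ Q(Y)` is of the
form `Q(f) ≫ Q(π_{Y'})⁻¹` for some such `Y'` and `f : X ⟶ Y/Y'`, and two representatives
with the same image agree after passing to a larger `Y''`);
(iii) if `φ : Q(X) ⟶ Q(Y)` is represented by `f : X ⟶ Y/Y'`, then `φ = 0` iff `f = 0`,
`φ` is a monomorphism iff `Ker f ∈ B`, and `φ` is an epimorphism iff `f` is one. -/
theorem quotient_category_hom_description
    (A : Type u) [Category.{v} A] [Abelian A] (hA : IsArtinianCat A)
    (B : A → Prop) (hB : IsSerreSub B)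
    (D : Type u₂) [Category.{v₂} D] [Abelian D] (Q : A ⥤ D)
    [Q.IsLocalization (serreW B)]
    [PreservesFiniteLimits Q] [PreservesFiniteColimits Q] :
    (∀ d : D, ∃ X : A, perp B X ∧ Nonempty (d ≅ Q.obj X)) ∧
    (∀ X Y : A, perp B X → perp B Y →
      (∀ g : Q.obj X ⟶ Q.obj Y, ∃ Y' : Subobject Y, B (Y' : A) ∧
        ∃ f : X ⟶ cokernel Y'.arrow, Q.map f = g ≫ Q.map (cokernel.π Y'.arrow)) ∧
      (∀ (Y₁ Y₂ : Subobject Y), B (Y₁ : A) → B (Y₂ : A) →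
        ∀ (f₁ : X ⟶ cokernel Y₁.arrow) (f₂ : X ⟶ cokernel Y₂.arrow)
          (g : Q.obj X ⟶ Q.obj Y),
          Q.map f₁ = g ≫ Q.map (cokernel.π Y₁.arrow) →
          Q.map f₂ = g ≫ Q.map (cokernel.π Y₂.arrow) →
          ∃ (Y₃ : Subobject Y) (h₁ : Y₁ ≤ Y₃) (h₂ : Y₂ ≤ Y₃), B (Y₃ : A) ∧
            f₁ ≫ quotMap h₁ = f₂ ≫ quotMap h₂)) ∧
    (∀ X Y : A, perp B X → perp B Y → ∀ Y' : Subobject Y, B (Y' : A) →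
      ∀ (f : X ⟶ cokernel Y'.arrow) (g : Q.obj X ⟶ Q.obj Y),
        Q.map f = g ≫ Q.map (cokernel.π Y'.arrow) →
        ((g = 0 ↔ f = 0) ∧ (Mono g ↔ B (kernel f)) ∧ (Epi g ↔ Epi f))) :=
  quotient_category_hom_description_general A hA B hB D Q

end Paper
end

section
/- Let A be an artinian abelian category and B a Serre subcategory such that the pair (A, B) satisfies the lifting property. Then every object X of A lies in an exact sequence 0 → Z → X → Y → 0 in A where Z ∈ B and Y ∈ ⊥B. -/
open CategoryTheory CategoryTheory.Limits ZeroObject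

universe w v u v₂ u₂ v₃ u₃ v₄ u₄

namespace Paper

open CategoryTheory CategoryTheory.Limits

variable {A : Type u} [Category.{v} A] [Abelian A]

omit [Abelian A] in
lemma exists_minimal_subobject {X : A} (hX : IsArtinianObj X)
    (S : Set (Subobject X)) (hS : S.Nonempty) :
    ∃ m ∈ S, ∀ v ∈ S, v ≤ m → v = m := by
  by_contra h
  push_neg at h
  obtain ⟨x₀, hx₀⟩ := hS
  choose g hg1 hg2 hg3 using h
  let f : ℕ → {v // v ∈ S} := fun n =>
    Nat.rec ⟨x₀, hx₀⟩ (fun _ p => ⟨g p.1 p.2, hg1 p.1 p.2⟩) n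
  obtain ⟨N, hN⟩ := hX (fun n => (f n).1) (fun n => hg2 (f n).1 (f n).2)
  exact hg3 (f N).1 (f N).2 (by
    have := hN (N + 1) (Nat.le_succ N)
    exact this)

lemma lemmaA {X : A} (hX : IsArtinianObj X) {B : A → Prop} (hB : IsSerreSub B) :
    ∃ (Y : A) (ι : Y ⟶ X), Mono ι ∧ B (cokernel ι) ∧ perp B Y := by
  set S : Set (Subobject X) := {V | B (cokernel V.arrow)} with hSdef
  have htop : (⊤ : Subobject X) ∈ S := by
    exact hB.of_iso (cokernel.ofEpi _).symm hB.zero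
  obtain ⟨Y, hYS, hYmin⟩ := exists_minimal_subobject hX S ⟨⊤, htop⟩
  refine ⟨(Y : A), Y.arrow, inferInstance, hYS, ?_⟩
  intro W hW f
  set k : (kernel f : A) ⟶ X := kernel.ι f ≫ Y.arrow with hk
  haveI : Mono k := mono_comp _ _
  -- B (cokernel (kernel.ι f))
  have hcm1 : B (cokernel (kernel.ι f)) :=
    hB.of_iso (Iso.symm (Abelian.coimageIsoImage f))
      (hB.of_mono (Abelian.image.ι f) inferInstance hW)
  -- the map b : cokernel k ⟶ cokernel Y.arrow
  let b : cokernel k ⟶ cokernel Y.arrow :=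
    cokernel.desc k (cokernel.π Y.arrow)
      (by rw [hk, Category.assoc, cokernel.condition, comp_zero])
  haveI hepib : Epi b := by
    have : Epi (cokernel.π k ≫ b) := by
      rw [cokernel.π_desc]; infer_instance
    exact epi_of_epi (cokernel.π k) b
  -- the map a : cokernel (kernel.ι f) ⟶ cokernel k
  let a : cokernel (kernel.ι f) ⟶ cokernel k :=
    cokernel.desc _ (Y.arrow ≫ cokernel.π k)
      (by rw [← Category.assoc, ← hk, cokernel.condition])
  have hab : a ≫ b = 0 := by
    rw [← cancel_epi (cokernel.π (kernel.ι f)), comp_zero, ← Category.assoc,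
      cokernel.π_desc, Category.assoc, cokernel.π_desc, cokernel.condition]
  let a' : cokernel (kernel.ι f) ⟶ kernel b := kernel.lift b a hab
  -- exactness of (Y.arrow, cokernel.π Y.arrow)
  have hexY : (ShortComplex.mk Y.arrow (cokernel.π Y.arrow) (cokernel.condition _)).Exact :=
    ShortComplex.exact_of_g_is_cokernel _ (cokernelIsCokernel _)
  -- Epi a' by a pseudoelement chase
  haveI hepi' : Epi a' := by
    open CategoryTheory.Abelian.Pseudoelement in
    apply epi_of_pseudo_surjective
    intro y
    obtain ⟨x, hx⟩ := pseudo_surjective_of_epi (cokernel.π k) (pseudoApply (kernel.ι b) y)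
    have hbx : pseudoApply (cokernel.π Y.arrow) x = 0 := by
      have h1 : pseudoApply (cokernel.π k ≫ b) x
          = pseudoApply b (pseudoApply (cokernel.π k) x) :=
        Abelian.Pseudoelement.comp_apply _ _ _
      have h2 : cokernel.π k ≫ b = cokernel.π Y.arrow := cokernel.π_desc _ _ _
      have h3 : pseudoApply b (pseudoApply (kernel.ι b) y) = 0 := by
        rw [← Abelian.Pseudoelement.comp_apply, kernel.condition]
        exact Abelian.Pseudoelement.zero_apply _ _
      rw [← h2, h1, hx, h3]
    obtain ⟨y', hy'⟩ := pseudo_exact_of_exact hexY x hbx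
    have hy'' : pseudoApply Y.arrow y' = x := hy'
    refine ⟨pseudoApply (cokernel.π (kernel.ι f)) y', ?_⟩
    apply pseudo_injective_of_mono (kernel.ι b)
    have hlift : a' ≫ kernel.ι b = a := kernel.lift_ι _ _ _
    rw [← Abelian.Pseudoelement.comp_apply, hlift]
    have h4 : cokernel.π (kernel.ι f) ≫ a = Y.arrow ≫ cokernel.π k := cokernel.π_desc _ _ _
    rw [← Abelian.Pseudoelement.comp_apply, h4, Abelian.Pseudoelement.comp_apply, hy'', hx]
  have hkerb : B (kernel b) := hB.of_epi a' hepi' hcm1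
  -- the short exact sequence kernel b → cokernel k → cokernel Y.arrow
  have hcokk : B (cokernel k) := by
    refine hB.of_extension (ShortComplex.mk (kernel.ι b) b (kernel.condition b)) ?_ hkerb hYS
    exact ShortComplex.ShortExact.mk'
      (ShortComplex.exact_of_f_is_kernel _ (kernelIsKernel b)) inferInstance hepib
  -- transfer along the underlying iso
  have hKS : Subobject.mk k ∈ S := by
    have harr : (Subobject.underlyingIso k).hom ≫ k = (Subobject.mk k).arrow :=
      Subobject.underlyingIso_hom_comp_eq_mk k
    exact hB.of_iso (cokernelIsoOfEq harr)
      (hB.of_iso (cokernelEpiComp (Subobject.underlyingIso k).hom k).symm hcokk)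
  have hKle : Subobject.mk k ≤ Y := by
    conv_rhs => rw [← Subobject.mk_arrow Y]
    exact Subobject.mk_le_mk_of_comm (kernel.ι f) rfl
  have hKeq : Subobject.mk k = Y := hYmin _ hKS hKle
  -- conclude f = 0
  have hYle : Subobject.mk Y.arrow ≤ Subobject.mk k := by
    rw [Subobject.mk_arrow]
    exact le_of_eq hKeq.symm
  let w : (Y : A) ⟶ (kernel f : A) := Subobject.ofMkLEMk Y.arrow k hYle
  have hw : w ≫ k = Y.arrow := Subobject.ofMkLEMk_comp hYle
  have hw2 : w ≫ kernel.ι f = 𝟙 _ := by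
    rw [← cancel_mono Y.arrow, Category.assoc, ← hk, hw, Category.id_comp]
  calc f = 𝟙 _ ≫ f := (Category.id_comp f).symm
    _ = (w ≫ kernel.ι f) ≫ f := by rw [hw2]
    _ = w ≫ (kernel.ι f ≫ f) := Category.assoc _ _ _
    _ = 0 := by rw [kernel.condition, comp_zero]


/-- **Statement 11.** Let `A` be an artinian abelian category and `B` a Serre subcategory
such that `(A, B)` satisfies the lifting property. Then every object `X` of `A` lies in an
exact sequence `0 → Z → X → Y → 0` with `Z ∈ B` and `Y ∈ ⊥B`. -/
theorem exists_short_exact_sub_in_B_quotient_in_perp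
    (A : Type u) [Category.{v} A] [Abelian A] (hA : IsArtinianCat A)
    (B : A → Prop) (hB : IsSerreSub B) (hlift : LiftingProperty B) :
    ∀ X : A, ∃ (Z : A) (i : Z ⟶ X), Mono i ∧ B Z ∧ perp B (cokernel i) := by
  intro X
  obtain ⟨Y, ι, hmono, hcok, hperp⟩ := lemmaA (hA X) hB
  obtain ⟨Z, ι', hmono', hBZ, hepi⟩ := hlift (cokernel.π ι) inferInstance hcok
  refine ⟨Z, ι', hmono', hBZ, ?_⟩
  intro W hW g
  have h1 : ι ≫ cokernel.π ι' ≫ g = 0 := hperp W hW _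
  have h2 : (ι' ≫ cokernel.π ι) ≫ cokernel.desc ι (cokernel.π ι' ≫ g) h1 = 0 := by
    rw [Category.assoc, cokernel.π_desc, ← Category.assoc, cokernel.condition, zero_comp]
  have h3 : cokernel.desc ι (cokernel.π ι' ≫ g) h1 = 0 := by
    haveI := hepi
    rw [← cancel_epi (ι' ≫ cokernel.π ι), comp_zero]
    exact h2
  have h4 : cokernel.π ι' ≫ g = 0 := by
    rw [← cokernel.π_desc ι (cokernel.π ι' ≫ g) h1, h3, comp_zero]
  rw [← cancel_epi (cokernel.π ι'), comp_zero]
  exact h4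


end Paper
end

section
/- Let A be an artinian abelian category and S a set of prime numbers. Then the pair (A, A_S) satisfies the lifting property: for every epimorphism X → Y in A with Y ∈ A_S, there exists a subobject X' ⊂ X with X' ∈ A_S such that the composition X' → X → Y is an epimorphism. -/
open CategoryTheory CategoryTheory.Limits ZeroObject

universe w v u v₂ u₂ v₃ u₃ v₄ u₄

namespace Paper

open CategoryTheory CategoryTheory.Limits

/-- **Statement 16.** Let `A` be an artinian abelian category and `S` a set of prime
numbers. Then the pair `(A, A_S)` satisfies the lifting property: for every epimorphism
`X → Y` in `A` with `Y` an `S`-primary torsion object, there is an `S`-primary torsion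
subobject `X' ⊆ X` such that the composition `X' → X → Y` is an epimorphism. -/
theorem torsion_liftingProperty
    (A : Type u) [Category.{v} A] [Abelian A] (hA : IsArtinianCat A)
    (S : Set ℕ) (hS : ∀ p ∈ S, p.Prime) :
    LiftingProperty (STorsionObj S (A := A)) := by
  intro X Y f hf hY
  haveI := hf
  obtain ⟨n, hn, hnY⟩ := hY
  -- top subobject satisfies the epi property
  have htop : Epi ((⊤ : Subobject X).arrow ≫ f) := epi_comp _ _
  -- there exists a minimal subobject whose composite with f is epi
  have hmin : ∃ X' : Subobject X, Epi (X'.arrow ≫ f) ∧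
      ∀ Z : Subobject X, Epi (Z.arrow ≫ f) → Z ≤ X' → Z = X' := by
    by_contra hc
    push_neg at hc
    have step : ∀ t : {Z : Subobject X // Epi (Z.arrow ≫ f)},
        ∃ t' : {Z : Subobject X // Epi (Z.arrow ≫ f)}, t'.1 ≤ t.1 ∧ t'.1 ≠ t.1 := by
      rintro ⟨Z, hZ⟩
      obtain ⟨Z', h1, h2, h3⟩ := hc Z hZ
      exact ⟨⟨Z', h1⟩, h2, h3⟩
    choose F hF1 hF2 using step
    set t0 : {Z : Subobject X // Epi (Z.arrow ≫ f)} := ⟨⊤, htop⟩ with ht0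
    obtain ⟨N, hN⟩ := hA X (fun i => (F^[i] t0).1) (fun i => by
      show (F^[i+1] t0).1 ≤ (F^[i] t0).1
      rw [Function.iterate_succ_apply']
      exact hF1 (F^[i] t0))
    have hne := hF2 (F^[N] t0)
    apply hne
    have h1 : (F^[N+1] t0).1 = (F^[N] t0).1 := hN (N+1) (Nat.le_succ N)
    rwa [Function.iterate_succ_apply'] at h1
  obtain ⟨X', hX'epi, hX'min⟩ := hmin
  haveI := hX'epi
  set X'o : A := (X' : A) with hX'o
  set g' : X'o ⟶ Y := X'.arrow ≫ f with hg'
  -- n • g' = 0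
  have hng' : n • g' = 0 := by
    have : g' ≫ (n • 𝟙 Y) = n • g' := by
      rw [Preadditive.comp_nsmul, Category.comp_id]
    rw [← this, hnY, comp_zero]
  -- powers of the multiplication-by-n endomorphism
  set pw : ℕ → (X'o ⟶ X'o) := fun i => (n ^ i : ℕ) • 𝟙 X'o with hpw
  have hpwcomp : ∀ i j : ℕ, pw i ≫ pw j = pw (i + j) := by
    intro i j
    simp only [hpw, Preadditive.nsmul_comp, Preadditive.comp_nsmul, Category.comp_id,
      smul_smul, ← pow_add]
    congr 1
    ring
  -- descending chain of images
  obtain ⟨N, hN⟩ := hA X'o (fun i => imageSubobject (pw i)) (fun i => by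
    show imageSubobject (pw (i+1)) ≤ imageSubobject (pw i)
    have h1 : pw (i + 1) = pw 1 ≫ pw i := by rw [hpwcomp]; congr 1; ring
    rw [h1]
    exact imageSubobject_comp_le _ _)
  set k : ℕ := N + 1 with hk
  have hkey : imageSubobject (pw (2 * k)) = imageSubobject (pw k) := by
    have h1 : imageSubobject (pw (2 * k)) = imageSubobject (pw N) :=
      hN (2 * k) (by omega)
    have h2 : imageSubobject (pw k) = imageSubobject (pw N) := hN k (by omega)
    rw [h1, h2]
  set W : Subobject X'o := imageSubobject (pw k) with hW
  set e : X'o ⟶ (W : A) := factorThruImageSubobject (pw k) with he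
  set m : (W : A) ⟶ X'o := W.arrow with hm
  have hem : e ≫ m = pw k := imageSubobject_arrow_comp (pw k)
  -- m ≫ g' = 0
  have hmg' : m ≫ g' = 0 := by
    have h0 : e ≫ m ≫ g' = 0 := by
      rw [← Category.assoc, hem]
      show ((n ^ k : ℕ) • 𝟙 X'o) ≫ g' = 0
      rw [Preadditive.nsmul_comp, Category.id_comp, hk, pow_succ, mul_smul, hng', smul_zero]
    exact zero_of_epi_comp e h0
  -- m ≫ e is epi (stabilization)
  have hwepi : Epi (m ≫ e) := by
    have hle : imageSubobject (pw (2 * k)) ≤ W := le_of_eq hkey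
    have hge : W ≤ imageSubobject (pw (2 * k)) := ge_of_eq hkey
    set j : (imageSubobject (pw (2 * k)) : A) ⟶ (W : A) := Subobject.ofLE _ _ hle with hj
    have hja : j ≫ m = (imageSubobject (pw (2 * k))).arrow := Subobject.ofLE_arrow hle
    have h2k : pw (2 * k) = pw k ≫ pw k := by rw [hpwcomp]; ring_nf
    have hfac : factorThruImageSubobject (pw (2 * k)) ≫ j = e ≫ (m ≫ e) := by
      have : (factorThruImageSubobject (pw (2 * k)) ≫ j) ≫ m
          = (e ≫ (m ≫ e)) ≫ m := by
        rw [Category.assoc, hja, imageSubobject_arrow_comp, h2k, ← hem]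
        simp only [Category.assoc]
      exact (cancel_mono m).mp this
    haveI hjepi : Epi j := by
      set j' : (W : A) ⟶ (imageSubobject (pw (2 * k)) : A) := Subobject.ofLE _ _ hge with hj'
      have hj'a : j' ≫ (imageSubobject (pw (2 * k))).arrow = m := Subobject.ofLE_arrow hge
      have hid : j' ≫ j = 𝟙 _ := by
        have : (j' ≫ j) ≫ m = 𝟙 _ ≫ m := by
          rw [Category.assoc, hja, hj'a, Category.id_comp]
        exact (cancel_mono m).mp this
      haveI : Epi (j' ≫ j) := by rw [hid]; infer_instance
      exact epi_of_epi j' j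
    haveI : Epi (factorThruImageSubobject (pw (2 * k)) ≫ j) := epi_comp _ _
    rw [hfac] at this
    exact epi_of_epi e (m ≫ e)
  -- the kernel of e composed with g' is epi
  have hZepi : Epi (kernel.ι e ≫ g') := by
    rw [Preadditive.epi_iff_cancel_zero]
    intro R t ht
    have h1 : kernel.ι e ≫ (g' ≫ t) = 0 := by rw [← Category.assoc]; exact ht
    set q := Abelian.epiDesc e (g' ≫ t) h1 with hq
    have h2 : e ≫ q = g' ≫ t := Abelian.comp_epiDesc e (g' ≫ t) h1
    have h3 : (m ≫ e) ≫ q = 0 := by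
      rw [Category.assoc, h2, ← Category.assoc, hmg', zero_comp]
    have h4 : q = 0 := zero_of_epi_comp (m ≫ e) h3
    have h5 : g' ≫ t = 0 := by rw [← h2, h4, comp_zero]
    exact zero_of_epi_comp g' h5
  -- the kernel as a subobject of X, and minimality
  haveI : Mono (kernel.ι e ≫ X'.arrow) := mono_comp _ _
  set X'' : Subobject X := Subobject.mk (kernel.ι e ≫ X'.arrow) with hX''
  have harr : (Subobject.underlyingIso (kernel.ι e ≫ X'.arrow)).hom ≫
      (kernel.ι e ≫ X'.arrow) = X''.arrow :=
    Subobject.underlyingIso_hom_comp_eq_mk _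
  have hX''epi : Epi (X''.arrow ≫ f) := by
    have : X''.arrow ≫ f = (Subobject.underlyingIso (kernel.ι e ≫ X'.arrow)).hom ≫
        (kernel.ι e ≫ g') := by
      rw [← harr]; simp only [Category.assoc, hg']
    rw [this]
    exact epi_comp _ _
  have hX''le : X'' ≤ X' := by
    have h1 : X'' ≤ Subobject.mk X'.arrow :=
      Subobject.mk_le_mk_of_comm (kernel.ι e) rfl
    rwa [Subobject.mk_arrow] at h1
  have heq : X'' = X' := hX'min X'' hX''epi hX''le
  -- deduce that kernel.ι e is (split) epi, hence e = 0
  have hkepi : Epi (kernel.ι e) := by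
    have hge2 : X' ≤ X'' := ge_of_eq heq
    set j2 : X'o ⟶ (X'' : A) := Subobject.ofLE _ _ hge2 with hj2
    have hj2a : j2 ≫ X''.arrow = X'.arrow := Subobject.ofLE_arrow hge2
    have hsplit : (j2 ≫ (Subobject.underlyingIso (kernel.ι e ≫ X'.arrow)).hom) ≫
        kernel.ι e = 𝟙 X'o := by
      have : ((j2 ≫ (Subobject.underlyingIso (kernel.ι e ≫ X'.arrow)).hom) ≫
          kernel.ι e) ≫ X'.arrow = 𝟙 X'o ≫ X'.arrow := by
        simp only [Category.assoc, Category.id_comp]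
        rw [harr]
        exact hj2a
      exact (cancel_mono X'.arrow).mp this
    haveI : Epi ((j2 ≫ (Subobject.underlyingIso (kernel.ι e ≫ X'.arrow)).hom) ≫
        kernel.ι e) := by rw [hsplit]; infer_instance
    exact epi_of_epi (j2 ≫ (Subobject.underlyingIso (kernel.ι e ≫ X'.arrow)).hom) (kernel.ι e)
  have he0 : e = 0 := by
    haveI := hkepi
    exact zero_of_epi_comp (kernel.ι e) (kernel.condition e)
  have hpwk0 : (n ^ k : ℕ) • 𝟙 X'o = 0 := by
    have : pw k = 0 := by rw [← hem, he0, zero_comp]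
    simpa [hpw] using this
  refine ⟨X'o, X'.arrow, inferInstance, ⟨n ^ k, ⟨pow_pos hn.1 k,
    fun p pp pd => hn.2 p pp (pp.dvd_of_dvd_pow pd)⟩, hpwk0⟩, hX'epi⟩

end Paper
end
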